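/- arXiv:2210.00355 — 5 statements merged into one kernel-verified Lean document; each statement's English description precedes it below -/
import Mathlib

section
/- Let g : [0,∞) → ℝ be continuous, convex, strictly decreasing, with g(x) ≤ −1 for all x, and suppose there is a real number L ≤ 0 such that L·x − g(x) → ∞ as x → ∞ and, for every real t < L, g(x) − t·x → ∞ as x → ∞. Suppose (y_n)_{n≥0} is a sequence in [0,∞) with y_0 = 0 such that for every n ≥ 0, y_{n+1} > y_n and M_{y_n, y_{n+1}} = 1. Then y_n → ∞ as n → ∞. -/
open MeasureTheory ProbabilityTheory Filter Set

noncomputable section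

namespace Bradley

variable {Ω : Type*} [MeasurableSpace Ω]

/-- The strong mixing (α-mixing) coefficient between two sub-σ-fields. -/
def alphaMix (P : Measure Ω) (𝓐 𝓑 : MeasurableSpace Ω) : ℝ :=
  sSup {x : ℝ | ∃ A B : Set Ω, MeasurableSet[𝓐] A ∧ MeasurableSet[𝓑] B ∧
    x = |(P (A ∩ B)).toReal - (P A).toReal * (P B).toReal|}

/-- `A : Fin n → Set Ω` is a finite partition of `Ω` into `𝓐`-measurable pieces. -/
def IsFinitePartitionIn (𝓐 : MeasurableSpace Ω) {n : ℕ} (A : Fin n → Set Ω) : Prop :=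
  (∀ i, MeasurableSet[𝓐] (A i)) ∧ Pairwise (Function.onFun Disjoint A) ∧ (⋃ i, A i) = Set.univ

/-- The absolute regularity (β-mixing) coefficient between two sub-σ-fields. -/
def betaMix (P : Measure Ω) (𝓐 𝓑 : MeasurableSpace Ω) : ℝ :=
  sSup {x : ℝ | ∃ (m n : ℕ) (A : Fin m → Set Ω) (B : Fin n → Set Ω),
    IsFinitePartitionIn 𝓐 A ∧ IsFinitePartitionIn 𝓑 B ∧
    x = (1/2) * ∑ i, ∑ j, |(P (A i ∩ B j)).toReal - (P (A i)).toReal * (P (B j)).toReal|}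

/-- Covariance of two real random variables. -/
def cov {Ω : Type*} {_ : MeasurableSpace Ω} (P : Measure Ω) (Y Z : Ω → ℝ) : ℝ :=
  ∫ ω, (Y ω - ∫ a, Y a ∂P) * (Z ω - ∫ a, Z a ∂P) ∂P

/-- Correlation of two real random variables. -/
def corr {Ω : Type*} {_ : MeasurableSpace Ω} (P : Measure Ω) (Y Z : Ω → ℝ) : ℝ :=
  cov P Y Z / (Real.sqrt (variance Y P) * Real.sqrt (variance Z P))

/-- The maximal correlation (ρ-mixing) coefficient between two sub-σ-fields. -/
def rhoMix (P : Measure Ω) (𝓐 𝓑 : MeasurableSpace Ω) : ℝ :=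
  sSup {x : ℝ | ∃ Y Z : Ω → ℝ, Measurable[𝓐] Y ∧ Measurable[𝓑] Z ∧
    MemLp Y 2 P ∧ MemLp Z 2 P ∧ 0 < variance Y P ∧ 0 < variance Z P ∧
    x = |corr P Y Z|}

/-- Strict stationarity of a two-sided sequence of real random variables. -/
def StrictlyStationary (P : Measure Ω) (X : ℤ → Ω → ℝ) : Prop :=
  ∀ j : ℤ, Measure.map (fun ω (k : ℤ) => X (k + j) ω) P
    = Measure.map (fun ω (k : ℤ) => X k ω) P

/-- Reversibility: the time-reversed sequence has the same distribution. -/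
def Reversible (P : Measure Ω) (X : ℤ → Ω → ℝ) : Prop :=
  Measure.map (fun ω (k : ℤ) => X (-k) ω) P = Measure.map (fun ω (k : ℤ) => X k ω) P

/-- The σ-field generated by `X j`, `j ≤ k`. -/
def pastSigma (X : ℤ → Ω → ℝ) (k : ℤ) : MeasurableSpace Ω :=
  ⨆ j ≤ k, MeasurableSpace.comap (X j) inferInstance

/-- The σ-field generated by `X j`, `j ≥ k`. -/
def futureSigma (X : ℤ → Ω → ℝ) (k : ℤ) : MeasurableSpace Ω :=
  ⨆ (j) (_ : k ≤ j), MeasurableSpace.comap (X j) inferInstance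

/-- Conditional independence of the σ-fields `mA` and `mB` given the σ-field `m`:
for all events `A ∈ mA`, `B ∈ mB`, `E[1_{A∩B} | m] = E[1_A | m] · E[1_B | m]` a.e. -/
def CondIndepGiven (P : Measure Ω) (m mA mB : MeasurableSpace Ω) : Prop :=
  ∀ A B : Set Ω, MeasurableSet[mA] A → MeasurableSet[mB] B →
    MeasureTheory.condExp m P ((A ∩ B).indicator fun _ => (1 : ℝ))
      =ᵐ[P] fun ω => MeasureTheory.condExp m P (A.indicator fun _ => (1 : ℝ)) ω
        * MeasureTheory.condExp m P (B.indicator fun _ => (1 : ℝ)) ω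

/-- Markov property: for every `k`, past and future are conditionally
independent given `σ(X k)`. -/
def IsMarkovChain (P : Measure Ω) (X : ℤ → Ω → ℝ) : Prop :=
  ∀ k : ℤ, CondIndepGiven P (MeasurableSpace.comap (X k) inferInstance)
    (pastSigma X k) (futureSigma X k)

/-- `α_X(n)`. -/
def alphaX (P : Measure Ω) (X : ℤ → Ω → ℝ) (n : ℕ) : ℝ :=
  alphaMix P (pastSigma X 0) (futureSigma X n)

/-- `β_X(n)`. -/
def betaX (P : Measure Ω) (X : ℤ → Ω → ℝ) (n : ℕ) : ℝ :=
  betaMix P (pastSigma X 0) (futureSigma X n)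

/-- `ρ_X(n)`. -/
def rhoX (P : Measure Ω) (X : ℤ → Ω → ℝ) (n : ℕ) : ℝ :=
  rhoMix P (pastSigma X 0) (futureSigma X n)

/-- The joint-probability matrix `Λ^{(ε,θ)}`. -/
def lam (ε θ : ℝ) (i j : Fin 2) : ℝ :=
  if i = 0 then
    (if j = 0 then (1 - ε) ^ 2 + (1 - ε) * ε * θ else (1 - ε) * ε - (1 - ε) * ε * θ)
  else
    (if j = 0 then (1 - ε) * ε - (1 - ε) * ε * θ else ε ^ 2 + (1 - ε) * ε * θ)

/-- The transition-probability matrix `ℙ^{(ε,θ)}`. -/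
def pmat (ε θ : ℝ) (i j : Fin 2) : ℝ :=
  if i = 0 then
    (if j = 0 then (1 - ε) + ε * θ else ε - ε * θ)
  else
    (if j = 0 then (1 - ε) - (1 - ε) * θ else ε + (1 - ε) * θ)

/-- Slope `ζ_{v,y}` of the chord of `g` from `v` to `y`. -/
def chordSlope (g : ℝ → ℝ) (v y : ℝ) : ℝ := (g y - g v) / (y - v)

/-- The chord (affine) function `C_{v,y}` (extended to all of `ℝ`). -/
def chordLine (g : ℝ → ℝ) (v y x : ℝ) : ℝ := g v + chordSlope g v y * (x - v)

/-- `M_{v,y} := sup_{x ∈ [v,y]} (C_{v,y}(x) − g(x))`. -/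
def Mvy (g : ℝ → ℝ) (v y : ℝ) : ℝ :=
  sSup ((fun x => chordLine g v y x - g x) '' Set.Icc v y)

/-- `g(x) := x·log₂ r + log₂ f(x)`. -/
def gOf (r : ℝ) (f : ℝ → ℝ) (x : ℝ) : ℝ := x * Real.logb 2 r + Real.logb 2 (f x)

theorem statement_13 (g : ℝ → ℝ)
    (hcont : ContinuousOn g (Set.Ici 0)) (hconv : ConvexOn ℝ (Set.Ici 0) g)
    (hanti : StrictAntiOn g (Set.Ici 0)) (hneg : ∀ x ∈ Set.Ici (0 : ℝ), g x ≤ -1)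
    (L : ℝ) (hL : L ≤ 0)
    (h1 : Tendsto (fun x => L * x - g x) atTop atTop)
    (h2 : ∀ t : ℝ, t < L → Tendsto (fun x => g x - t * x) atTop atTop)
    (y : ℕ → ℝ) (hy0 : y 0 = 0) (hpos : ∀ n, 0 ≤ y n)
    (hinc : ∀ n : ℕ, y n < y (n + 1))
    (hM : ∀ n : ℕ, Mvy g (y n) (y (n + 1)) = 1) :
    Tendsto y atTop atTop := by
  by_contra hcon
  have hmono : StrictMono y := strictMono_nat_of_lt_succ hinc
  rcases tendsto_of_monotone hmono.monotone with h | ⟨l, hl⟩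
  · exact hcon h
  have hle : ∀ n, y n ≤ l := fun n => hmono.monotone.ge_of_tendsto hl n
  have hl0 : (0:ℝ) ≤ l := (hpos 0).trans (hle 0)
  have hc : ContinuousWithinAt g (Set.Ici 0) l := hcont l hl0
  rw [Metric.continuousWithinAt_iff] at hc
  obtain ⟨δ, hδ, hδ'⟩ := hc (1/4) (by norm_num)
  obtain ⟨N, hN⟩ := Metric.tendsto_atTop.mp hl δ hδ
  have hvw : y N < y (N + 1) := hinc N
  have hvd : |y N - l| < δ := by
    have := hN N le_rfl
    rwa [Real.dist_eq] at this
  have hsub : ∀ x ∈ Set.Icc (y N) (y (N + 1)), x ∈ Set.Ici (0:ℝ) ∧ |x - l| < δ := by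
    intro x hx
    refine ⟨le_trans (hpos N) hx.1, abs_lt.mpr ⟨?_, ?_⟩⟩
    · have := abs_lt.mp hvd
      linarith [hx.1, this.1]
    · linarith [hx.2, hle (N + 1), hδ]
  have hbound : ∀ z ∈ (fun x => chordLine g (y N) (y (N + 1)) x - g x) ''
      Set.Icc (y N) (y (N + 1)), z ≤ 1/2 := by
    rintro z ⟨x, hx, rfl⟩
    obtain ⟨hx0, hxd⟩ := hsub x hx
    have hgx : |g x - g l| < 1/4 := by
      have := hδ' hx0 hxd
      rwa [Real.dist_eq] at this
    have hgv : |g (y N) - g l| < 1/4 := by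
      have := hδ' (hpos N) hvd
      rwa [Real.dist_eq] at this
    have hgw : g (y (N + 1)) < g (y N) := hanti (hpos N) (hpos (N + 1)) hvw
    have hslope : chordSlope g (y N) (y (N + 1)) ≤ 0 := by
      unfold chordSlope
      apply div_nonpos_of_nonpos_of_nonneg <;> linarith
    have hchord : chordLine g (y N) (y (N + 1)) x ≤ g (y N) := by
      unfold chordLine
      nlinarith [hx.1]
    have h1 := abs_lt.mp hgx
    have h2 := abs_lt.mp hgv
    simp only
    linarith
  have hMle : Mvy g (y N) (y (N + 1)) ≤ 1/2 := by
    apply csSup_le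
    · exact ⟨_, Set.mem_image_of_mem _ (Set.left_mem_Icc.mpr hvw.le)⟩
    · exact hbound
  linarith [hM N]

end Bradley
end
end

section
/- Let g : [0,∞) → ℝ be continuous, convex, strictly decreasing, with g(x) ≤ −1 for all x. Suppose (y_n)_{n≥0} is a strictly increasing sequence in [0,∞) with y_0 = 0 and M_{y_{n−1}, y_n} = 1 for every n ≥ 1, and for n ≥ 1 let L_n : ℝ → ℝ be the affine function with L_n(y_{n−1}) = g(y_{n−1}) and L_n(y_n) = g(y_n). Then for all positive integers h < j: (a) L_j(x) − L_h(x) > j − h for all x ≥ y_j; and (b) L_j(x) − L_h(x) < −(j − h) for all x ∈ [0, y_{h−1}]. -/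
open MeasureTheory ProbabilityTheory Filter Set

noncomputable section

namespace Bradley

variable {Ω : Type*} [MeasurableSpace Ω]

lemma chordLine_right (g : ℝ → ℝ) {v w : ℝ} (hvw : v < w) (x : ℝ) :
    chordLine g v w x = g w + chordSlope g v w * (x - w) := by
  have h : w - v ≠ 0 := sub_ne_zero.mpr hvw.ne'
  unfold chordLine chordSlope
  field_simp
  ring

lemma chord_diff (g : ℝ → ℝ) {a b : ℝ} (c : ℝ) (hab : a < b) (x : ℝ) :
    chordLine g b c x - chordLine g a b x
      = (chordSlope g b c - chordSlope g a b) * (x - b) := by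
  rw [chordLine_right g hab x]
  unfold chordLine; ring

lemma chord_above_right (g : ℝ → ℝ) (hconv : ConvexOn ℝ (Set.Ici 0) g)
    {a b x : ℝ} (ha : 0 ≤ a) (hab : a < b) (hbx : b < x) :
    chordLine g a b x ≤ g x := by
  have hx : (0:ℝ) ≤ x := le_of_lt (lt_of_le_of_lt ha (hab.trans hbx))
  have hs := hconv.slope_mono_adjacent ha hx hab hbx
  have h1 : (0:ℝ) < b - a := sub_pos.mpr hab
  have h2 : (0:ℝ) < x - b := sub_pos.mpr hbx
  rw [chordLine_right g hab x]
  unfold chordSlope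
  rw [div_le_div_iff₀ h1 h2] at hs
  rw [← sub_nonneg]
  have : g x - (g b + (g b - g a) / (b - a) * (x - b))
      = ((g x - g b) * (b - a) - (g b - g a) * (x - b)) / (b - a) := by
    field_simp; ring
  rw [this]
  exact div_nonneg (by linarith) h1.le

lemma chord_above_left (g : ℝ → ℝ) (hconv : ConvexOn ℝ (Set.Ici 0) g)
    {b c x : ℝ} (hx : 0 ≤ x) (hxb : x < b) (hbc : b < c) :
    chordLine g b c x ≤ g x := by
  have hc : (0:ℝ) ≤ c := le_of_lt (lt_of_le_of_lt hx (hxb.trans hbc))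
  have hs := hconv.slope_mono_adjacent hx hc hxb hbc
  have h1 : (0:ℝ) < b - x := sub_pos.mpr hxb
  have h2 : (0:ℝ) < c - b := sub_pos.mpr hbc
  unfold chordLine chordSlope
  rw [div_le_div_iff₀ h1 h2] at hs
  rw [← sub_nonneg]
  have : g x - (g b + (g c - g b) / (c - b) * (x - b))
      = ((g c - g b) * (b - x) - (g b - g x) * (c - b)) / (c - b) := by
    field_simp; ring
  rw [this]
  exact div_nonneg (by linarith) h2.le

lemma Mvy_attained {g : ℝ → ℝ} {v w : ℝ} (hvw : v < w)
    (hc : ContinuousOn g (Set.Icc v w)) :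
    ∃ x ∈ Set.Icc v w, chordLine g v w x - g x = Mvy g v w := by
  have hcf : ContinuousOn (fun x => chordLine g v w x - g x) (Set.Icc v w) := by
    apply ContinuousOn.sub _ hc
    apply Continuous.continuousOn
    unfold chordLine
    continuity
  obtain ⟨x0, hx0, hmax⟩ := isCompact_Icc.exists_isMaxOn
    (Set.nonempty_Icc.mpr hvw.le) hcf
  refine ⟨x0, hx0, ?_⟩
  unfold Mvy
  apply le_antisymm
  · exact le_csSup (isCompact_Icc.image_of_continuousOn hcf).bddAbove ⟨x0, hx0, rfl⟩
  · apply csSup_le ((Set.nonempty_Icc.mpr hvw.le).image _)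
    rintro _ ⟨z, hz, rfl⟩
    exact hmax hz

lemma key_step (g : ℝ → ℝ) (hcont : ContinuousOn g (Set.Ici 0))
    (hconv : ConvexOn ℝ (Set.Ici 0) g)
    {a b c : ℝ} (ha : 0 ≤ a) (hab : a < b) (hbc : b < c)
    (hMab : Mvy g a b = 1) (hMbc : Mvy g b c = 1) :
    0 < chordSlope g b c - chordSlope g a b ∧
    1 < (chordSlope g b c - chordSlope g a b) * (c - b) ∧
    1 < (chordSlope g b c - chordSlope g a b) * (b - a) := by
  set s := chordSlope g b c - chordSlope g a b with hs
  have hb : (0:ℝ) ≤ b := ha.trans hab.le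
  -- point x1 in (b,c) where chord over [b,c] exceeds g by exactly 1
  obtain ⟨x1, hx1, hx1eq⟩ := Mvy_attained hbc
    (hcont.mono (Set.Icc_subset_Ici_self.trans (Set.Ici_subset_Ici.mpr hb)))
  rw [hMbc] at hx1eq
  have hx1b : b < x1 := by
    rcases lt_or_eq_of_le hx1.1 with h | h
    · exact h
    · exfalso; rw [← h] at hx1eq
      simp [chordLine] at hx1eq
  have hx1c : x1 < c := by
    rcases lt_or_eq_of_le hx1.2 with h | h
    · exact h
    · exfalso; rw [h, chordLine_right g hbc] at hx1eq
      simp at hx1eq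
  have hga : chordLine g a b x1 ≤ g x1 := chord_above_right g hconv ha hab hx1b
  have h1 : 1 ≤ s * (x1 - b) := by
    have := chord_diff g c hab x1
    nlinarith
  have hspos : 0 < s := by nlinarith [sub_pos.mpr hx1b]
  have hcb : 1 < s * (c - b) := by nlinarith
  -- point x2 in (a,b) where chord over [a,b] exceeds g by exactly 1
  obtain ⟨x2, hx2, hx2eq⟩ := Mvy_attained hab
    (hcont.mono (Set.Icc_subset_Ici_self.trans (Set.Ici_subset_Ici.mpr ha)))
  rw [hMab] at hx2eq
  have hx2a : a < x2 := by
    rcases lt_or_eq_of_le hx2.1 with h | h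
    · exact h
    · exfalso; rw [← h] at hx2eq
      simp [chordLine] at hx2eq
  have hx2b : x2 < b := by
    rcases lt_or_eq_of_le hx2.2 with h | h
    · exact h
    · exfalso; rw [h, chordLine_right g hab] at hx2eq
      simp at hx2eq
  have hgb : chordLine g b c x2 ≤ g x2 :=
    chord_above_left g hconv (ha.trans hx2a.le) hx2b hbc
  have h2 : 1 ≤ s * (b - x2) := by
    have := chord_diff g c hab x2
    nlinarith
  exact ⟨hspos, hcb, by nlinarith⟩

theorem statement_15 (g : ℝ → ℝ)
    (hcont : ContinuousOn g (Set.Ici 0)) (hconv : ConvexOn ℝ (Set.Ici 0) g)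
    (hanti : StrictAntiOn g (Set.Ici 0)) (hneg : ∀ x ∈ Set.Ici (0 : ℝ), g x ≤ -1)
    (y : ℕ → ℝ) (hy0 : y 0 = 0) (hpos : ∀ n, 0 ≤ y n) (hmono : StrictMono y)
    (hM : ∀ n : ℕ, 1 ≤ n → Mvy g (y (n - 1)) (y n) = 1) :
    ∀ h j : ℕ, 1 ≤ h → h < j →
      (∀ x : ℝ, y j ≤ x →
        (j : ℝ) - (h : ℝ) <
          chordLine g (y (j - 1)) (y j) x - chordLine g (y (h - 1)) (y h) x) ∧
      (∀ x ∈ Set.Icc (0 : ℝ) (y (h - 1)),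
        chordLine g (y (j - 1)) (y j) x - chordLine g (y (h - 1)) (y h) x
          < -((j : ℝ) - (h : ℝ))) := by
  intro h j hh hhj
  -- key facts for each n ≥ 1
  have key : ∀ n : ℕ, 1 ≤ n →
      0 < chordSlope g (y n) (y (n+1)) - chordSlope g (y (n-1)) (y n) ∧
      1 < (chordSlope g (y n) (y (n+1)) - chordSlope g (y (n-1)) (y n)) * (y (n+1) - y n) ∧
      1 < (chordSlope g (y n) (y (n+1)) - chordSlope g (y (n-1)) (y n)) * (y n - y (n-1)) := by
    intro n hn
    have h1 : n - 1 < n := Nat.sub_lt hn one_pos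
    have hM2 : Mvy g (y n) (y (n+1)) = 1 := by
      have := hM (n+1) (by omega)
      simpa using this
    exact key_step g hcont hconv (hpos (n-1)) (hmono h1) (hmono (Nat.lt_succ_self n))
      (hM n hn) hM2
  -- induction on j starting at h+1
  induction j with
  | zero => omega
  | succ j ih =>
    rcases Nat.lt_or_ge h j with hj | hj
    · -- inductive step: h < j, so h < j + 1 via ih at j plus one more interval
      obtain ⟨IH1, IH2⟩ := ih hj
      have hj1 : 1 ≤ j := hh.trans hj.le
      obtain ⟨hs, hsc, hsb⟩ := key j hj1
      have hsucc : (j + 1) - 1 = j := by omega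
      rw [hsucc]
      constructor
      · intro x hx
        have hyj : y j ≤ x := (hmono (Nat.lt_succ_self j)).le.trans hx
        have d1 := IH1 x hyj
        have hd := chord_diff g (y (j+1)) (hmono (Nat.sub_lt hj1 one_pos)) x
        have : 1 < (chordSlope g (y j) (y (j+1)) - chordSlope g (y (j-1)) (y j)) * (x - y j) := by
          nlinarith
        push_cast
        nlinarith
      · intro x hx
        have d2 := IH2 x hx
        have hd := chord_diff g (y (j+1)) (hmono (Nat.sub_lt hj1 one_pos)) x
        have hxle : x ≤ y (j - 1) := by
          refine hx.2.trans ?_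
          exact hmono.monotone (by omega)
        have : (chordSlope g (y j) (y (j+1)) - chordSlope g (y (j-1)) (y j)) * (x - y j) < -1 := by
          nlinarith
        push_cast
        nlinarith
    · -- base case: j + 1 = h + 1, i.e. j = h
      have hjh : j = h := by omega
      subst hjh
      obtain ⟨hs, hsc, hsb⟩ := key j hh
      have hsucc : (j + 1) - 1 = j := by omega
      rw [hsucc]
      constructor
      · intro x hx
        have hd := chord_diff g (y (j+1)) (hmono (Nat.sub_lt hh one_pos)) x
        rw [hd]
        push_cast
        nlinarith
      · intro x hx
        have hd := chord_diff g (y (j+1)) (hmono (Nat.sub_lt hh one_pos)) x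
        rw [hd]
        push_cast
        nlinarith [hx.2]

end Bradley
end
end

section
/- Let g : [0,∞) → ℝ be continuous, convex, strictly decreasing, with g(x) ≤ −1 for all x. Suppose (y_n)_{n≥0} is a strictly increasing sequence in [0,∞) with y_0 = 0 and M_{y_{n−1}, y_n} = 1 for every n ≥ 1, and for n ≥ 1 let L_n : ℝ → ℝ be the affine function with L_n(y_{n−1}) = g(y_{n−1}) and L_n(y_n) = g(y_n), and set a_n := L_n(0). Then a_n ≤ −n for every positive integer n. -/
open MeasureTheory ProbabilityTheory Filter Set

noncomputable section

namespace Bradley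

variable {Ω : Type*} [MeasurableSpace Ω]

theorem statement_16 (g : ℝ → ℝ)
    (hcont : ContinuousOn g (Set.Ici 0)) (hconv : ConvexOn ℝ (Set.Ici 0) g)
    (hanti : StrictAntiOn g (Set.Ici 0)) (hneg : ∀ x ∈ Set.Ici (0 : ℝ), g x ≤ -1)
    (y : ℕ → ℝ) (hy0 : y 0 = 0) (hpos : ∀ n, 0 ≤ y n) (hmono : StrictMono y)
    (hM : ∀ n : ℕ, 1 ≤ n → Mvy g (y (n - 1)) (y n) = 1) :
    ∀ n : ℕ, 1 ≤ n → chordLine g (y (n - 1)) (y n) 0 ≤ -(n : ℝ) := by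
  -- extension of a chord to the left lies below g
  have ext_left : ∀ v w x : ℝ, 0 ≤ x → x ≤ v → v < w → 0 ≤ v →
      chordLine g v w x ≤ g x := by
    intro v w x hx hxv hvw hv
    rcases eq_or_lt_of_le hxv with rfl | hxv
    · simp [chordLine]
    · have hs := hconv.slope_mono_adjacent (x := x) (y := v) (z := w)
        hx (le_trans hv hvw.le) hxv hvw
      have hvx : (0:ℝ) < v - x := by linarith
      have : chordSlope g v w * (x - v) ≤ (g v - g x) / (v - x) * (x - v) := by
        apply mul_le_mul_of_nonpos_right _ (by linarith)
        exact hs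
      have h2 : (g v - g x) / (v - x) * (x - v) = g x - g v := by
        field_simp
        ring
      unfold chordLine chordSlope at *
      linarith [this, h2.le, h2.ge]
  -- attainment of the sup
  have attain : ∀ n : ℕ, 1 ≤ n → ∃ x ∈ Icc (y (n-1)) (y n),
      chordLine g (y (n-1)) (y n) x - g x = 1 := by
    intro n hn
    set u := y (n-1); set v := y n
    have huv : u < v := hmono (by omega)
    have hIcc : Icc u v ⊆ Ici (0:ℝ) := fun z hz => le_trans (hpos _) hz.1
    have hcg : ContinuousOn (fun x => chordLine g u v x - g x) (Icc u v) := by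
      apply ContinuousOn.sub _ (hcont.mono hIcc)
      exact (continuous_const.add (continuous_const.mul (continuous_id.sub continuous_const))).continuousOn
    have hcomp : IsCompact ((fun x => chordLine g u v x - g x) '' Icc u v) :=
      (isCompact_Icc).image_of_continuousOn hcg
    have hne : ((fun x => chordLine g u v x - g x) '' Icc u v).Nonempty :=
      (nonempty_Icc.2 huv.le).image _
    have := hcomp.sSup_mem hne
    rw [show sSup ((fun x => chordLine g u v x - g x) '' Icc u v) = Mvy g u v from rfl,
      hM n hn] at this
    obtain ⟨x, hx, hx1⟩ := this
    exact ⟨x, hx, hx1⟩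
  intro n hn
  induction n with
  | zero => omega
  | succ m ih =>
    rcases Nat.eq_or_lt_of_le hn with h1 | h1
    · -- base case n = 1
      have : m = 0 := by omega
      subst this
      simp only [Nat.sub_self]
      have : chordLine g (y 0) (y 1) 0 = g 0 := by
        simp [chordLine, hy0]
      rw [this]
      have := hneg 0 (by simp)
      push_cast
      linarith
    · -- inductive step: m ≥ 1
      have hm : 1 ≤ m := by omega
      have ihm := ih hm
      obtain ⟨x, hx, hx1⟩ := attain m hm
      set u := y (m-1); set v := y m; set w := y (m+1)
      have huv : u < v := hmono (by omega)
      have hvw : v < w := hmono (by omega)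
      have hx0 : 0 ≤ x := le_trans (hpos _) hx.1
      have hslope : chordSlope g u v ≤ chordSlope g v w :=
        hconv.slope_mono_adjacent (hpos _) (hpos _) huv hvw
      have hext : chordLine g v w x ≤ g x := ext_left v w x hx0 hx.2 hvw (hpos _)
      have key1 : chordLine g v w 0 = chordLine g v w x - chordSlope g v w * x := by
        unfold chordLine; ring
      have key2 : chordLine g u v 0 = chordLine g u v x - chordSlope g u v * x := by
        unfold chordLine; ring
      have hmul : chordSlope g u v * x ≤ chordSlope g v w * x :=
        mul_le_mul_of_nonneg_right hslope hx0
      have : chordLine g v w 0 ≤ chordLine g u v 0 - 1 := by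
        rw [key1, key2]
        linarith
      simp only [Nat.add_sub_cancel]
      push_cast
      have hm1 : ((m:ℝ)) ≤ (m:ℝ) := le_refl _
      calc chordLine g v w 0 ≤ chordLine g u v 0 - 1 := this
        _ ≤ -(m:ℝ) - 1 := by linarith [ihm]
        _ = -((m:ℝ) + 1) := by ring

end Bradley
end
end

section
/- Let g : [0,∞) → ℝ be continuous, convex, strictly decreasing, with g(x) ≤ −1 for all x. Suppose (y_n)_{n≥0} is a strictly increasing sequence in [0,∞) with y_0 = 0 and M_{y_{n−1}, y_n} = 1 for every n ≥ 1, and for n ≥ 1 let L_n : ℝ → ℝ be the affine function with L_n(y_{n−1}) = g(y_{n−1}) and L_n(y_n) = g(y_n), written L_n(x) = a_n + s_n·x. Then for every positive integer n, every x ∈ [y_{n−1}, y_n], and every positive integer j: a_j + s_j·x = L_j(x) ≤ g(x) + 1 − |n − j|. -/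
open MeasureTheory ProbabilityTheory Filter Set

noncomputable section

namespace Bradley

variable {Ω : Type*} [MeasurableSpace Ω]

lemma chordLine_right_s17 (g : ℝ → ℝ) {v y : ℝ} (h : v < y) : chordLine g v y y = g y := by
  have : y - v ≠ 0 := by linarith
  rw [chordLine, chordSlope, div_mul_cancel₀ _ this]; ring

lemma chordLine_shift (g : ℝ → ℝ) {a b : ℝ} (hab : a < b) (t : ℝ) :
    chordLine g a b t = g b + chordSlope g a b * (t - b) := by
  have hb := chordLine_right_s17 g hab
  simp only [chordLine] at hb ⊢
  linear_combination hb

lemma chord_le_right {g : ℝ → ℝ} (hconv : ConvexOn ℝ (Set.Ici 0) g)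
    {v w x : ℝ} (hv : 0 ≤ v) (hvw : v < w) (hx : w ≤ x) :
    chordLine g v w x ≤ g x := by
  rcases eq_or_lt_of_le hx with rfl | hx
  · exact (chordLine_right_s17 g hvw).le
  have hsec := hconv.secant_mono (a := v) (x := w) (y := x)
    (mem_Ici.2 hv) (mem_Ici.2 (by linarith)) (mem_Ici.2 (by linarith))
    (by linarith) (by linarith) hx.le
  have hxv : (0:ℝ) < x - v := by linarith
  have heq : (g x - g v) / (x - v) * (x - v) = g x - g v :=
    div_mul_cancel₀ _ (ne_of_gt hxv)
  have h2 := mul_le_mul_of_nonneg_right hsec hxv.le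
  rw [heq] at h2
  simp only [chordLine, chordSlope]; linarith

lemma chord_le_left {g : ℝ → ℝ} (hconv : ConvexOn ℝ (Set.Ici 0) g)
    {v w x : ℝ} (hx0 : 0 ≤ x) (hx : x ≤ v) (hvw : v < w) :
    chordLine g v w x ≤ g x := by
  rcases eq_or_lt_of_le hx with rfl | hx
  · simp [chordLine]
  have hsec := hconv.secant_mono (a := v) (x := x) (y := w)
    (mem_Ici.2 (by linarith)) (mem_Ici.2 hx0) (mem_Ici.2 (by linarith))
    (by linarith) (by linarith) (by linarith)
  have hxv : x - v < 0 := by linarith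
  have h1 : (g x - g v) / (x - v) * (x - v) = g x - g v :=
    div_mul_cancel₀ _ (ne_of_lt hxv)
  have h2 := mul_le_mul_of_nonpos_right hsec hxv.le
  rw [h1] at h2
  simp only [chordLine, chordSlope]; linarith

lemma slope_mono {g : ℝ → ℝ} (hconv : ConvexOn ℝ (Set.Ici 0) g)
    {a b c : ℝ} (ha : 0 ≤ a) (hab : a < b) (hbc : b < c) :
    chordSlope g a b ≤ chordSlope g b c := by
  have hsec := hconv.secant_mono (a := b) (x := a) (y := c)
    (mem_Ici.2 (by linarith)) (mem_Ici.2 ha) (mem_Ici.2 (by linarith))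
    (by linarith) (by linarith) (by linarith)
  have : (g a - g b) / (a - b) = chordSlope g a b := by
    rw [chordSlope, show g a - g b = -(g b - g a) by ring,
      show a - b = -(b - a) by ring, neg_div_neg_eq]
  rw [this] at hsec
  exact hsec

lemma Mvy_spec {g : ℝ → ℝ} (hcont : ContinuousOn g (Set.Ici 0))
    {v w : ℝ} (hv : 0 ≤ v) (hvw : v < w) :
    (∀ x ∈ Set.Icc v w, chordLine g v w x - g x ≤ Mvy g v w) ∧
    ∃ x ∈ Set.Icc v w, chordLine g v w x - g x = Mvy g v w := by
  set F : ℝ → ℝ := fun x => chordLine g v w x - g x with hF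
  have hsub : Set.Icc v w ⊆ Set.Ici 0 := fun x hx => le_trans hv hx.1
  have hFc : ContinuousOn F (Set.Icc v w) := by
    apply ContinuousOn.sub _ (hcont.mono hsub)
    have : Continuous fun x => chordLine g v w x := by unfold chordLine; fun_prop
    exact this.continuousOn
  have hcomp : IsCompact (F '' Set.Icc v w) := isCompact_Icc.image_of_continuousOn hFc
  have hne : (F '' Set.Icc v w).Nonempty := (Set.nonempty_Icc.2 hvw.le).image _
  exact ⟨fun x hx => le_csSup hcomp.bddAbove (Set.mem_image_of_mem F hx),
    hcomp.sSup_mem hne⟩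

section Steps
variable {g : ℝ → ℝ} {y : ℕ → ℝ}
variable (hcont : ContinuousOn g (Set.Ici 0)) (hconv : ConvexOn ℝ (Set.Ici 0) g)
variable (hpos : ∀ n, 0 ≤ y n) (hmono : StrictMono y)
variable (hM : ∀ n : ℕ, 1 ≤ n → Mvy g (y (n - 1)) (y n) = 1)

include hcont hconv hpos hmono hM in
lemma step_right {m : ℕ} {x : ℝ} (hx : y (m + 2) ≤ x) :
    chordLine g (y m) (y (m + 1)) x + 1 ≤ chordLine g (y (m + 1)) (y (m + 2)) x := by
  have h12 : y (m + 1) < y (m + 2) := hmono (by omega)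
  have h01 : y m < y (m + 1) := hmono (by omega)
  obtain ⟨hle, xs, hxs, hxseq⟩ := Mvy_spec hcont (v := y (m+1)) (w := y (m+2))
    (hpos _) h12
  have hMval : Mvy g (y (m + 1)) (y (m + 2)) = 1 := by
    have := hM (m + 2) (by omega)
    simpa using this
  rw [hMval] at hxseq
  -- chord m at xs is below g
  have hbelow : chordLine g (y m) (y (m + 1)) xs ≤ g xs :=
    chord_le_right hconv (hpos m) h01 hxs.1
  -- rewrite both chords around the shared point y (m+1)
  have e1 := chordLine_shift g h01
  set s1 := chordSlope g (y m) (y (m + 1))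
  set s2 := chordSlope g (y (m + 1)) (y (m + 2))
  have hs : s1 ≤ s2 := slope_mono hconv (hpos m) h01 h12
  have hxs1 : 0 ≤ xs - y (m + 1) := by linarith [hxs.1]
  have hDxs : 1 ≤ (s2 - s1) * (xs - y (m + 1)) := by
    have := e1 xs
    simp only [chordLine] at *
    nlinarith
  have hxge : xs - y (m + 1) ≤ x - y (m + 1) := by linarith [hxs.2]
  have hDx : 1 ≤ (s2 - s1) * (x - y (m + 1)) := by nlinarith
  have := e1 x
  simp only [chordLine] at *
  nlinarith

include hcont hconv hpos hmono hM in
lemma step_left {m : ℕ} {x : ℝ} (hx0 : 0 ≤ x) (hx : x ≤ y m) :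
    chordLine g (y (m + 1)) (y (m + 2)) x + 1 ≤ chordLine g (y m) (y (m + 1)) x := by
  have h12 : y (m + 1) < y (m + 2) := hmono (by omega)
  have h01 : y m < y (m + 1) := hmono (by omega)
  obtain ⟨hle, xs, hxs, hxseq⟩ := Mvy_spec hcont (v := y m) (w := y (m+1))
    (hpos _) h01
  have hMval : Mvy g (y m) (y (m + 1)) = 1 := by
    have := hM (m + 1) (by omega)
    simpa using this
  rw [hMval] at hxseq
  have hbelow : chordLine g (y (m + 1)) (y (m + 2)) xs ≤ g xs :=
    chord_le_left hconv (le_trans (hpos m) hxs.1) hxs.2 h12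
  have e1 := chordLine_shift g h01
  set s1 := chordSlope g (y m) (y (m + 1))
  set s2 := chordSlope g (y (m + 1)) (y (m + 2))
  have hs : s1 ≤ s2 := slope_mono hconv (hpos m) h01 h12
  have hxs1 : 0 ≤ y (m + 1) - xs := by linarith [hxs.2]
  have hDxs : 1 ≤ (s2 - s1) * (y (m + 1) - xs) := by
    have := e1 xs
    simp only [chordLine] at *
    nlinarith
  have hxge : y (m + 1) - xs ≤ y (m + 1) - x := by linarith [hxs.1]
  have hDx : 1 ≤ (s2 - s1) * (y (m + 1) - x) := by nlinarith
  have := e1 x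
  simp only [chordLine] at *
  nlinarith

include hcont hconv hpos hmono hM in
lemma right_chain : ∀ k i : ℕ, ∀ x : ℝ, y (i + 1 + k) ≤ x →
    chordLine g (y i) (y (i + 1)) x ≤ g x - k := by
  intro k
  induction k with
  | zero =>
    intro i x hx
    simpa using chord_le_right hconv (hpos i) (hmono (by omega)) (by simpa using hx)
  | succ k ih =>
    intro i x hx
    have hx2 : y (i + 2) ≤ x :=
      le_trans (hmono.monotone (by omega : i + 2 ≤ i + 1 + (k + 1))) hx
    have h1 := step_right hcont hconv hpos hmono hM (m := i) hx2
    have h2 := ih (i + 1) x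
      (by rw [show i + 1 + 1 + k = i + 1 + (k + 1) from by omega]; exact hx)
    push_cast
    linarith

include hcont hconv hpos hmono hM in
lemma left_chain : ∀ k i : ℕ, k ≤ i → ∀ x : ℝ, 0 ≤ x → x ≤ y (i - k) →
    chordLine g (y i) (y (i + 1)) x ≤ g x - k := by
  intro k
  induction k with
  | zero =>
    intro i _ x hx0 hx
    simpa using chord_le_left hconv hx0 (by simpa using hx) (hmono (by omega))
  | succ k ih =>
    intro i hki x hx0 hx
    obtain ⟨i', rfl⟩ : ∃ i', i = i' + 1 := ⟨i - 1, by omega⟩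
    have hxi' : x ≤ y i' :=
      le_trans hx (hmono.monotone (by omega))
    have h1 := step_left hcont hconv hpos hmono hM (m := i') hx0 hxi'
    have h2 := ih i' (by omega) x hx0
      (by rwa [show i' + 1 - (k + 1) = i' - k from by omega] at hx)
    push_cast
    linarith

end Steps

theorem statement_17 (g : ℝ → ℝ)
    (hcont : ContinuousOn g (Set.Ici 0)) (hconv : ConvexOn ℝ (Set.Ici 0) g)
    (hanti : StrictAntiOn g (Set.Ici 0)) (hneg : ∀ x ∈ Set.Ici (0 : ℝ), g x ≤ -1)
    (y : ℕ → ℝ) (hy0 : y 0 = 0) (hpos : ∀ n, 0 ≤ y n) (hmono : StrictMono y)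
    (hM : ∀ n : ℕ, 1 ≤ n → Mvy g (y (n - 1)) (y n) = 1) :
    ∀ n : ℕ, 1 ≤ n → ∀ x ∈ Set.Icc (y (n - 1)) (y n), ∀ j : ℕ, 1 ≤ j →
      chordLine g (y (j - 1)) (y j) x ≤ g x + 1 - |(n : ℝ) - (j : ℝ)| := by
  intro n hn x hx j hj
  obtain ⟨i, rfl⟩ : ∃ i, j = i + 1 := ⟨j - 1, by omega⟩
  simp only [Nat.add_sub_cancel]
  rcases lt_trichotomy (i + 1) n with hlt | heq | hgt
  · -- j < n
    have hk : i + 1 + (n - 1 - (i + 1)) = n - 1 := by omega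
    have h := right_chain hcont hconv hpos hmono hM (n - 1 - (i + 1)) i x
      (by rw [show i + 1 + (n - 1 - (i + 1)) = n - 1 by omega]; exact hx.1)
    have hc : ((n - 1 - (i + 1) : ℕ) : ℝ) + ((i : ℝ) + 1) + 1 = (n : ℝ) := by
      have h0 := congrArg (Nat.cast (R := ℝ)) (show (n - 1 - (i + 1)) + (i + 1) + 1 = n by omega)
      push_cast at h0
      linarith
    push_cast
    rw [abs_of_pos (by linarith)]
    linarith
  · -- j = n
    subst heq
    obtain ⟨hle, -⟩ := Mvy_spec hcont (v := y i) (w := y (i + 1))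
      (hpos _) (hmono (by omega))
    have hMv := hM (i + 1) (by omega)
    simp only [Nat.add_sub_cancel] at hMv hx
    have h := hle x hx
    rw [hMv] at h
    simp only [sub_self, abs_zero]
    linarith
  · -- j > n
    have h := left_chain hcont hconv hpos hmono hM (i - n) i (by omega) x
      (le_trans (hpos _) hx.1) (by rw [show i - (i - n) = n by omega]; exact hx.2)
    have hc : ((i - n : ℕ) : ℝ) + (n : ℝ) = (i : ℝ) := by
      have h0 := congrArg (Nat.cast (R := ℝ)) (show (i - n) + n = i by omega)
      push_cast at h0
      linarith
    have hc2 : ((i : ℝ) + 1) - (n : ℝ) > 0 := by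
      have h0 := congrArg (Nat.cast (R := ℝ)) (show n + (i + 1 - n) = i + 1 by omega)
      have h1' : 1 ≤ i + 1 - n := by omega
      have h1 : (1 : ℝ) ≤ ((i + 1 - n : ℕ) : ℝ) := by exact_mod_cast h1'
      push_cast at h0
      linarith
    push_cast
    rw [abs_of_neg (by linarith)]
    linarith

end Bradley
end
end

section
/- Let r ∈ (0,1] and let f : [0,∞) → (0, 1/2] be continuous and strictly decreasing with f(x) → 0 as x → ∞, with u^x = o(f(x)) as x → ∞ for every u ∈ (0,1), and with x ↦ log f(x) convex on [0,∞). Define g(x) := x·log₂ r + log₂ f(x). Suppose (y_n)_{n≥0} is a strictly increasing sequence in [0,∞) with y_0 = 0, y_n → ∞ as n → ∞, and M_{y_{n−1}, y_n} = 1 for every n ≥ 1; for n ≥ 1 let s_n be the slope of the affine function L_n with L_n(y_{n−1}) = g(y_{n−1}) and L_n(y_n) = g(y_n). Then s_1 < s_2 < s_3 < ⋯ < 0, and sup_{n∈ℕ} s_n = lim_{n→∞} s_n = log₂ r. -/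
open MeasureTheory ProbabilityTheory Filter Set

noncomputable section

namespace Bradley

variable {Ω : Type*} [MeasurableSpace Ω]

theorem statement_19 (r : ℝ) (hr : r ∈ Set.Ioc (0 : ℝ) 1) (f : ℝ → ℝ)
    (hrange : ∀ x ∈ Set.Ici (0 : ℝ), f x ∈ Set.Ioc (0 : ℝ) (1/2))
    (hcont : ContinuousOn f (Set.Ici 0))
    (hanti : StrictAntiOn f (Set.Ici 0))
    (hlim : Tendsto f atTop (nhds 0))
    (hlittle : ∀ u ∈ Set.Ioo (0 : ℝ) 1, (fun x => u ^ x) =o[atTop] f)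
    (hconv : ConvexOn ℝ (Set.Ici 0) fun x => Real.log (f x))
    (y : ℕ → ℝ) (hy0 : y 0 = 0) (hpos : ∀ n, 0 ≤ y n) (hmono : StrictMono y)
    (hytop : Tendsto y atTop atTop)
    (hM : ∀ n : ℕ, Mvy (gOf r f) (y n) (y (n + 1)) = 1) :
    StrictMono (fun n : ℕ => chordSlope (gOf r f) (y n) (y (n + 1))) ∧
    (∀ n : ℕ, chordSlope (gOf r f) (y n) (y (n + 1)) < 0) ∧
    (⨆ n : ℕ, chordSlope (gOf r f) (y n) (y (n + 1))) = Real.logb 2 r ∧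
    Tendsto (fun n : ℕ => chordSlope (gOf r f) (y n) (y (n + 1))) atTop
      (nhds (Real.logb 2 r)) := by
  obtain ⟨hr0, hr1⟩ := hr
  set c := Real.logb 2 r with hc
  set h : ℝ → ℝ := fun x => Real.logb 2 (f x) with hh
  set g := gOf r f with hg
  set s : ℕ → ℝ := fun n => chordSlope g (y n) (y (n + 1)) with hs
  set t : ℕ → ℝ := fun n => chordSlope h (y n) (y (n + 1)) with ht
  have hfpos : ∀ x ∈ Set.Ici (0:ℝ), 0 < f x := fun x hx => (hrange x hx).1
  have hylt : ∀ n, y n < y (n + 1) := fun n => hmono (Nat.lt_succ_self n)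
  have hcle : c ≤ 0 := Real.logb_nonpos one_lt_two hr0.le hr1
  -- convexity of h
  have hconvh : ConvexOn ℝ (Set.Ici 0) h := by
    have h2 := hconv.smul (c := (Real.log 2)⁻¹) (by positivity)
    have hfun : h = fun x => (Real.log 2)⁻¹ • Real.log (f x) := by
      funext x
      simp [hh, Real.logb, div_eq_inv_mul, smul_eq_mul]
    rw [hfun]; exact h2
  -- convexity of g
  have hgx : ∀ x : ℝ, g x = x * c + h x := fun x => rfl
  have hconvg : ConvexOn ℝ (Set.Ici 0) g := by
    have hlin : ConvexOn ℝ (Set.Ici 0) (fun x : ℝ => x * c) := by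
      refine ⟨convex_Ici 0, fun x _ y _ a b _ _ _ => ?_⟩
      simp only [smul_eq_mul]
      apply le_of_eq; ring
    have := hlin.add hconvh
    exact this
  -- slope relation
  have hslope : ∀ n, s n = c + t n := by
    intro n
    have hne : y (n + 1) - y n ≠ 0 := sub_ne_zero.2 (hylt n).ne'
    simp only [hs, ht, chordSlope, hgx]
    field_simp
    ring
  -- h strictly decreasing
  have hhlt : ∀ {a b : ℝ}, 0 ≤ a → a < b → h b < h a := by
    intro a b ha hab
    exact Real.logb_lt_logb one_lt_two (hfpos b (le_trans ha hab.le))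
      (hanti ha (le_trans ha hab.le) hab)
  have htneg : ∀ n, t n < 0 := fun n =>
    div_neg_of_neg_of_pos (sub_neg.2 (hhlt (hpos n) (hylt n))) (sub_pos.2 (hylt n))
  have hsneg : ∀ n, s n < 0 := fun n => by
    have := htneg n; rw [hslope n]; linarith
  -- strict monotonicity
  have hsmono : StrictMono s := by
    apply strictMono_nat_of_lt_succ
    intro n
    have hmle : s n ≤ s (n + 1) :=
      hconvg.slope_mono_adjacent (hpos n) (hpos (n + 2)) (hylt n) (hylt (n + 1))
    rcases lt_or_eq_of_le hmle with hlt | heq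
    · exact hlt
    · exfalso
      have hab : y n < y (n + 1) := hylt n
      have hbd : y (n + 1) < y (n + 2) := hylt (n + 1)
      have hbne : y (n + 1) - y n ≠ 0 := sub_ne_zero.2 hab.ne'
      have hSb : g (y (n + 1)) - g (y n) = s n * (y (n + 1) - y n) := by
        rw [hs]; simp only [chordSlope]; rw [div_mul_cancel₀ _ hbne]
      have key : ∀ x ∈ Set.Icc (y n) (y (n + 1)), chordLine g (y n) (y (n + 1)) x - g x = 0 := by
        intro x hx
        have hxmem : x ∈ Set.Ici (0 : ℝ) := le_trans (hpos n) hx.1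
        have hge : g x ≤ g (y n) + s n * (x - y n) := by
          rcases eq_or_lt_of_le hx.1 with rfl | hax
          · simp
          · have := hconvg.secant_mono (a := y n) (x := x) (y := y (n + 1))
              (hpos n) hxmem (hpos (n + 1)) (ne_of_gt hax) (ne_of_gt hab) hx.2
            rw [div_le_div_iff₀ (by linarith) (by linarith)] at this
            have hsn : (g (y (n + 1)) - g (y n)) * (x - y n)
                = s n * (x - y n) * (y (n + 1) - y n) := by rw [hSb]; ring
            nlinarith [sub_pos.2 hab, sub_pos.2 hax]
        have hle : g (y n) + s n * (x - y n) ≤ g x := by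
          rcases eq_or_lt_of_le hx.2 with rfl | hxb
          · linarith [hSb]
          · -- slope (x, y(n+1)) equals s n
            have h1 : (g (y n) - g (y (n + 1))) / (y n - y (n + 1))
                ≤ (g x - g (y (n + 1))) / (x - y (n + 1)) :=
              hconvg.secant_mono (a := y (n + 1)) (hpos (n + 1)) (hpos n) hxmem
                (ne_of_lt hab) (ne_of_lt hxb) hx.1
            have h2 : (g (y (n + 1)) - g x) / (y (n + 1) - x)
                ≤ (g (y (n + 2)) - g (y (n + 1))) / (y (n + 2) - y (n + 1)) :=
              hconvg.slope_mono_adjacent hxmem (hpos (n + 2)) hxb hbd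
            have e1 : (g (y n) - g (y (n + 1))) / (y n - y (n + 1)) = s n := by
              rw [hs]; simp only [chordSlope]
              rw [← neg_div_neg_eq]; ring_nf
            have e2 : (g x - g (y (n + 1))) / (x - y (n + 1))
                = (g (y (n + 1)) - g x) / (y (n + 1) - x) := by
              rw [← neg_div_neg_eq]; ring_nf
            have e3 : (g (y (n + 2)) - g (y (n + 1))) / (y (n + 2) - y (n + 1)) = s n := by
              rw [heq]; rfl
            rw [e1, e2] at h1
            rw [e3] at h2
            have heqS : (g (y (n + 1)) - g x) / (y (n + 1) - x) = s n := le_antisymm h2 h1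
            have hxbne : y (n + 1) - x ≠ 0 := sub_ne_zero.2 hxb.ne'
            have : g (y (n + 1)) - g x = s n * (y (n + 1) - x) := by
              rw [← heqS, div_mul_cancel₀ _ hxbne]
            nlinarith [hSb]
        have hcl : chordLine g (y n) (y (n + 1)) x = g (y n) + s n * (x - y n) := rfl
        rw [hcl]; linarith
      have hM0 : Mvy g (y n) (y (n + 1)) = 0 := by
        unfold Mvy
        rw [Set.image_congr key, Set.Nonempty.image_const ⟨y n, Set.left_mem_Icc.2 hab.le⟩]
        exact csSup_singleton 0
      rw [hM n] at hM0
      norm_num at hM0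
  -- h x / x tends to 0
  have hhx : Tendsto (fun x => h x / x) atTop (nhds 0) := by
    rw [Metric.tendsto_atTop]
    intro ε hε
    set u : ℝ := (2 : ℝ) ^ (-(ε / 2)) with hu
    have hu0 : 0 < u := Real.rpow_pos_of_pos two_pos _
    have hu1 : u < 1 := Real.rpow_lt_one_of_one_lt_of_neg one_lt_two (by linarith)
    have ho := (hlittle u ⟨hu0, hu1⟩).def one_pos
    obtain ⟨N, hN⟩ := eventually_atTop.1 ho
    refine ⟨max N 1, fun x hx => ?_⟩
    have hx1 : (1 : ℝ) ≤ x := le_trans (le_max_right N 1) hx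
    have hx0 : (0 : ℝ) < x := lt_of_lt_of_le one_pos hx1
    have hfx : 0 < f x := hfpos x hx0.le
    have hux : u ^ x ≤ f x := by
      have := hN x (le_trans (le_max_left N 1) hx)
      rwa [Real.norm_eq_abs, Real.norm_eq_abs, abs_of_pos (Real.rpow_pos_of_pos hu0 x),
        abs_of_pos hfx, one_mul] at this
    have hlog : -(ε / 2) * x ≤ h x := by
      have h1 : Real.logb 2 (u ^ x) ≤ Real.logb 2 (f x) :=
        Real.logb_le_logb_of_le one_lt_two (Real.rpow_pos_of_pos hu0 x) hux
      have h2 : Real.logb 2 (u ^ x) = -(ε / 2) * x := by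
        rw [hu, ← Real.rpow_mul (by norm_num : (0:ℝ) ≤ 2),
          Real.logb_rpow (by norm_num) (by norm_num)]
      rw [← h2]; exact h1
    have hhneg : h x ≤ 0 :=
      Real.logb_nonpos one_lt_two hfx.le (le_trans (hrange x hx0.le).2 (by norm_num))
    rw [Real.dist_eq, sub_zero, abs_of_nonpos (div_nonpos_of_nonpos_of_nonneg hhneg hx0.le),
      ← neg_div]
    have hmul : -h x < ε * x := by nlinarith
    exact (div_lt_iff₀ hx0).2 hmul
  -- lower bound sequence tends to 0
  have hlow0 : Tendsto (fun x => (h x - h 0) / x) atTop (nhds 0) := by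
    have h2 : Tendsto (fun x : ℝ => h 0 / x) atTop (nhds 0) := by
      simpa [div_eq_mul_inv] using tendsto_inv_atTop_zero.const_mul (h 0)
    have := hhx.sub h2
    simp only [sub_zero] at this
    refine this.congr fun x => ?_
    rw [sub_div]
  have hysucc : Tendsto (fun n : ℕ => y (n + 1)) atTop atTop :=
    hytop.comp (tendsto_add_atTop_nat 1)
  have hlowy : Tendsto (fun n : ℕ => (h (y (n + 1)) - h 0) / y (n + 1)) atTop (nhds 0) :=
    hlow0.comp hysucc
  have hlowle : ∀ n : ℕ, (h (y (n + 1)) - h 0) / y (n + 1) ≤ t n := by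
    intro n
    rcases Nat.eq_zero_or_pos n with rfl | hn
    · simp only [ht, chordSlope, hy0, sub_zero]
      exact le_rfl
    · have hyn : (0 : ℝ) < y n := by
        have := hmono hn
        rwa [hy0] at this
      have hb0 : (0 : ℝ) < y (n + 1) := lt_trans hyn (hylt n)
      have := hconvh.secant_mono (a := y (n + 1)) (x := (0 : ℝ)) (y := y n)
        (hpos (n + 1)) Set.self_mem_Ici (hpos n) (ne_of_lt hb0) (ne_of_lt (hylt n)) (hpos n)
      have e1 : (h 0 - h (y (n + 1))) / (0 - y (n + 1))
          = (h (y (n + 1)) - h 0) / y (n + 1) := by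
        rw [← neg_div_neg_eq]; ring_nf
      have e2 : (h (y n) - h (y (n + 1))) / (y n - y (n + 1)) = t n := by
        rw [ht]; simp only [chordSlope]
        rw [← neg_div_neg_eq]; ring_nf
      rw [e1, e2] at this
      exact this
  -- t tends to 0
  have httends : Tendsto t atTop (nhds 0) :=
    tendsto_of_tendsto_of_tendsto_of_le_of_le hlowy tendsto_const_nhds hlowle
      fun n => (htneg n).le
  -- s tends to c
  have hstends : Tendsto s atTop (nhds c) := by
    have := (tendsto_const_nhds (x := c) (f := atTop (α := ℕ))).add httends
    rw [add_zero] at this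
    exact this.congr fun n => (hslope n).symm
  -- iSup
  have hbdd : BddAbove (Set.range s) := by
    refine ⟨c, ?_⟩
    rintro x ⟨n, rfl⟩
    have := htneg n
    rw [hslope n]; linarith
  have hsup : (⨆ n : ℕ, s n) = c :=
    tendsto_nhds_unique (tendsto_atTop_ciSup hsmono.monotone hbdd) hstends
  exact ⟨hsmono, hsneg, hsup, hstends⟩

end Bradley
end
end
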